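/- arXiv:2204.11266 — 4 statements merged into one kernel-verified Lean document; each statement's English description precedes it below -/
import Mathlib

section
/- Let a₁, a₂, b ∈ ℝ with b > 0, let x₂ > 0, and define h : ℝ³ → ℝ by h(x₁, y, z₁) = max(0, |z₁ − a₁x₁ − a₂y| − b|x₁| − b|y|). Assume h(0, x₂, 0) > 0 (equivalently |a₂| > b), and set ψ* = −sign(a₂) (note a₂ ≠ 0). Then for every direction d = (d₁, d₂, d₃) ∈ ℝ³, the one-sided limit lim_{α → 0⁺} ( h(α d₁, x₂ + α d₂, α d₃) − h(0, x₂, 0) ) / α exists and equals ψ*·(d₃ − a₁ d₁ − a₂ d₂) − b|d₁| − b d₂. -/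
open Filter

set_option maxHeartbeats 1000000

/-- Directional derivative of `h(x₁, y, z₁) = max(0, |z₁ - a₁x₁ - a₂y| - b|x₁| - b|y|)`
at the point `(0, x₂, 0)` with `x₂ > 0` and `h(0, x₂, 0) > 0`: for every direction
`(d₁, d₂, d₃)` the one-sided limit exists and equals
`ψ*·(d₃ - a₁d₁ - a₂d₂) - b|d₁| - b d₂`, where `ψ* = -sign a₂`. -/
theorem directional_derivative_of_h (a₁ a₂ b x₂ : ℝ) (hb : 0 < b) (hx₂ : 0 < x₂)
    (h : ℝ → ℝ → ℝ → ℝ)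
    (hh : ∀ x₁ y z₁, h x₁ y z₁ = max 0 (|z₁ - a₁ * x₁ - a₂ * y| - b * |x₁| - b * |y|))
    (hpos : 0 < h 0 x₂ 0) (ψstar : ℝ) (hψ : ψstar = -Real.sign a₂) :
    ∀ d₁ d₂ d₃ : ℝ,
      Tendsto (fun α => (h (α * d₁) (x₂ + α * d₂) (α * d₃) - h 0 x₂ 0) / α)
        (nhdsWithin 0 (Set.Ioi 0))
        (nhds (ψstar * (d₃ - a₁ * d₁ - a₂ * d₂) - b * |d₁| - b * d₂)) := by
  intro d₁ d₂ d₃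
  set K := d₃ - a₁ * d₁ - a₂ * d₂ with hKdef
  have hx2abs : |x₂| = x₂ := abs_of_pos hx₂
  have habs0 : |0 - a₁ * 0 - a₂ * x₂| = |a₂| * x₂ := by
    rw [show (0 - a₁ * 0 - a₂ * x₂) = -(a₂ * x₂) by ring, abs_neg, abs_mul, hx2abs]
  have ht : 0 < |a₂| * x₂ - b * x₂ := by
    have := hpos
    rw [hh, habs0] at this
    simp only [abs_zero, mul_zero, sub_zero, hx2abs] at this
    rcases lt_max_iff.mp this with h' | h'
    · exact absurd h' (lt_irrefl 0)
    · exact h'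
  have h0 : h 0 x₂ 0 = |a₂| * x₂ - b * x₂ := by
    rw [hh, habs0]
    simp only [abs_zero, mul_zero, sub_zero, hx2abs]
    exact max_eq_right ht.le
  have hab : b < |a₂| := by nlinarith
  have ha₂ : a₂ ≠ 0 := by
    intro h'
    rw [h'] at hab; simp at hab; linarith
  have hψa : ψstar * (-a₂) = |a₂| := by
    rcases lt_or_gt_of_ne ha₂ with hlt | hgt
    · rw [hψ, Real.sign_of_neg hlt, abs_of_neg hlt]; ring
    · rw [hψ, Real.sign_of_pos hgt, abs_of_pos hgt]; ring
  set M := |K| + b * |d₁| + b * |d₂| + 1 with hMdef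
  have hM : 0 < M := by positivity
  set δ := min (x₂ / (|d₂| + 1)) ((|a₂| - b) * x₂ / M) with hδdef
  have hδ : 0 < δ := by
    apply lt_min
    · positivity
    · apply div_pos _ hM; nlinarith
  have hmem : Set.Ioo (0:ℝ) δ ∈ nhdsWithin (0:ℝ) (Set.Ioi 0) :=
    Ioo_mem_nhdsGT_of_mem ⟨le_refl 0, hδ⟩
  apply Tendsto.congr' _ tendsto_const_nhds
  filter_upwards [hmem] with α hα
  obtain ⟨hα0, hαδ⟩ := hα
  have hα1 : α < x₂ / (|d₂| + 1) := lt_of_lt_of_le hαδ (min_le_left _ _)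
  have hα2 : α < (|a₂| - b) * x₂ / M := lt_of_lt_of_le hαδ (min_le_right _ _)
  have hd2 : 0 < |d₂| + 1 := by positivity
  have hαd2 : α * (|d₂| + 1) < x₂ := (lt_div_iff₀ hd2).mp hα1
  have hy : 0 < x₂ + α * d₂ := by
    have : α * d₂ ≥ -(α * |d₂|) := by
      have := neg_abs_le d₂
      nlinarith
    nlinarith
  have hαM : α * M < (|a₂| - b) * x₂ := (lt_div_iff₀ hM).mp hα2
  have hKM : |K| ≤ M := by nlinarith [mul_nonneg hb.le (abs_nonneg d₁), mul_nonneg hb.le (abs_nonneg d₂)]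
  have hαK : α * |K| < |a₂| * x₂ := by
    have h1 : α * |K| ≤ α * M := by nlinarith
    nlinarith
  -- sign of the inner expression
  have hu : |α * K - a₂ * x₂| = ψstar * (α * K - a₂ * x₂) := by
    have h1 : -(α * |K|) ≤ α * K := by nlinarith [neg_abs_le K]
    have h2 : α * K ≤ α * |K| := by nlinarith [le_abs_self K]
    rcases lt_or_gt_of_ne ha₂ with hlt | hgt
    · have hpos' : 0 < α * K - a₂ * x₂ := by
        have : |a₂| = -a₂ := abs_of_neg hlt
        nlinarith
      rw [abs_of_pos hpos', hψ, Real.sign_of_neg hlt]; ring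
    · have hneg' : α * K - a₂ * x₂ < 0 := by
        have : |a₂| = a₂ := abs_of_pos hgt
        nlinarith
      rw [abs_of_neg hneg', hψ, Real.sign_of_pos hgt]; ring
  have hinner : α * d₃ - a₁ * (α * d₁) - a₂ * (x₂ + α * d₂) = α * K - a₂ * x₂ := by
    rw [hKdef]; ring
  have habsx1 : |α * d₁| = α * |d₁| := by
    rw [abs_mul, abs_of_pos hα0]
  have habsy : |x₂ + α * d₂| = x₂ + α * d₂ := abs_of_pos hy
  have hval : h (α * d₁) (x₂ + α * d₂) (α * d₃)
      = ψstar * (α * K - a₂ * x₂) - b * (α * |d₁|) - b * (x₂ + α * d₂) := by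
    rw [hh, hinner, hu, habsx1, habsy]
    apply max_eq_right
    have hpsiu : ψstar * (α * K - a₂ * x₂) = |α * K - a₂ * x₂| := hu.symm
    have : |a₂| * x₂ - α * |K| ≤ |α * K - a₂ * x₂| := by
      have := abs_sub_abs_le_abs_sub (a₂ * x₂) (α * K)
      rw [abs_sub_comm] at this
      have h3 : |a₂ * x₂| = |a₂| * x₂ := by rw [abs_mul, hx2abs]
      have h4 : |α * K| = α * |K| := by rw [abs_mul, abs_of_pos hα0]
      linarith [abs_sub_abs_le_abs_sub (a₂ * x₂) (α * K), h3 ▸ h4 ▸ this]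
    rw [hpsiu]
    have hexp : α * M = α * |K| + b * (α * |d₁|) + b * (α * |d₂|) + α := by
      rw [hMdef]; ring
    have hbd2 : b * α * d₂ ≤ b * α * |d₂| :=
      mul_le_mul_of_nonneg_left (le_abs_self d₂) (by positivity)
    nlinarith [hexp, hbd2, this]
  have hψK : ψstar * (-(a₂ * x₂)) = |a₂| * x₂ := by
    have : ψstar * (-(a₂ * x₂)) = (ψstar * (-a₂)) * x₂ := by ring
    rw [this, hψa]
  refine Eq.symm ?_
  show (h (α * d₁) (x₂ + α * d₂) (α * d₃) - h 0 x₂ 0) / α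
      = ψstar * K - b * |d₁| - b * d₂
  rw [hval, h0]
  have : ψstar * (α * K - a₂ * x₂) - b * (α * |d₁|) - b * (x₂ + α * d₂)
      - (|a₂| * x₂ - b * x₂) = α * (ψstar * K - b * |d₁| - b * d₂) := by
    nlinarith [hψK]
  rw [this, mul_div_cancel_left₀ _ (ne_of_gt hα0)]
end

section
/- Let a₁, a₂, b ∈ ℝ with b > 0, let x₂ > 0, and define h : ℝ³ → ℝ by h(x₁, y, z₁) = max(0, |z₁ − a₁x₁ − a₂y| − b|x₁| − b|y|). Assume h(0, x₂, 0) > 0, and set ψ* = −sign(a₂). Then h is superdifferentiable at the point p = (0, x₂, 0): the set D = { (−a₁ψ* + w, −a₂ψ* − b, ψ*) : w ∈ [−b, b] } ⊆ ℝ³ is convex and compact, and for every d ∈ ℝ³ the one-sided limit lim_{α → 0⁺} ( h(p + α d) − h(p) ) / α exists and equals min_{v ∈ D} ⟨v, d⟩. -/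
open Filter

set_option maxHeartbeats 800000 in
/-- Superdifferentiability of `h(x₁, y, z₁) = max(0, |z₁ - a₁x₁ - a₂y| - b|x₁| - b|y|)` at
`p = (0, x₂, 0)` with `x₂ > 0`, `h(p) > 0`: the set
`D = {(-a₁ψ* + w, -a₂ψ* - b, ψ*) : w ∈ [-b, b]}` is convex and compact, and for every
direction `d` the one-sided directional derivative exists and equals `min_{v ∈ D} ⟨v, d⟩`. -/
theorem h_superdifferentiable (a₁ a₂ b x₂ : ℝ) (hb : 0 < b) (hx₂ : 0 < x₂)
    (h : ℝ × ℝ × ℝ → ℝ)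
    (hh : ∀ p : ℝ × ℝ × ℝ,
      h p = max 0 (|p.2.2 - a₁ * p.1 - a₂ * p.2.1| - b * |p.1| - b * |p.2.1|))
    (hpos : 0 < h (0, x₂, 0)) (ψstar : ℝ) (hψ : ψstar = -Real.sign a₂)
    (D : Set (ℝ × ℝ × ℝ))
    (hD : D = (fun w => (-a₁ * ψstar + w, -a₂ * ψstar - b, ψstar)) '' Set.Icc (-b) b) :
    Convex ℝ D ∧ IsCompact D ∧
    ∀ d : ℝ × ℝ × ℝ,
      Tendsto (fun α => (h ((0, x₂, 0) + α • d) - h (0, x₂, 0)) / α)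
        (nhdsWithin 0 (Set.Ioi 0))
        (nhds (sInf ((fun v : ℝ × ℝ × ℝ =>
          v.1 * d.1 + v.2.1 * d.2.1 + v.2.2 * d.2.2) '' D))) := by
  have h0 : h (0, x₂, 0) = max 0 ((|a₂| - b) * x₂) := by
    rw [hh]
    simp only
    congr 1
    rw [show (0 : ℝ) - a₁ * 0 - a₂ * x₂ = -(a₂ * x₂) by ring, abs_neg, abs_mul,
      abs_of_pos hx₂, abs_zero]
    ring
  have hba : b < |a₂| := by
    rw [h0] at hpos
    rcases lt_max_iff.mp hpos with h1 | h1
    · linarith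
    · nlinarith
  have hval : h (0, x₂, 0) = (|a₂| - b) * x₂ := h0.trans (max_eq_right (by nlinarith))
  have ha₂ : a₂ ≠ 0 := by intro hc; rw [hc] at hba; simp at hba; linarith
  have hψ1 : ψstar = 1 ∨ ψstar = -1 := by
    rcases lt_or_gt_of_ne ha₂ with hc | hc
    · left; rw [hψ, Real.sign_of_neg hc]; ring
    · right; rw [hψ, Real.sign_of_pos hc]
  have habsψ : |ψstar| = 1 := by rcases hψ1 with h1 | h1 <;> rw [h1] <;> simp
  have hψa : ψstar * a₂ = -|a₂| := by
    rcases lt_or_gt_of_ne ha₂ with hc | hc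
    · rw [hψ, Real.sign_of_neg hc, abs_of_neg hc]; ring
    · rw [hψ, Real.sign_of_pos hc, abs_of_pos hc]; ring
  refine ⟨?_, ?_, ?_⟩
  · -- Convex
    rw [hD]
    rintro x ⟨w₁, hw₁, rfl⟩ y ⟨w₂, hw₂, rfl⟩ s t hs ht hst
    refine ⟨s * w₁ + t * w₂, (convex_Icc (-b) b) hw₁ hw₂ hs ht hst, ?_⟩
    simp only [Prod.smul_mk, Prod.mk_add_mk, smul_eq_mul, Prod.mk.injEq]
    refine ⟨by linear_combination (a₁ * ψstar) * hst,
      by linear_combination (a₂ * ψstar + b) * hst,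
      by linear_combination (-ψstar) * hst⟩
  · -- Compact
    rw [hD]
    exact isCompact_Icc.image (by fun_prop)
  · intro d
    set c : ℝ := d.2.2 - a₁ * d.1 - a₂ * d.2.1 with hc
    set S : ℝ := ψstar * c - b * |d.1| - b * d.2.1 with hS
    -- the infimum equals S
    have hinf : sInf ((fun v : ℝ × ℝ × ℝ =>
        v.1 * d.1 + v.2.1 * d.2.1 + v.2.2 * d.2.2) '' D) = S := by
      rw [hD, Set.image_image]
      apply IsLeast.csInf_eq
      constructor
      · refine ⟨if 0 ≤ d.1 then -b else b, ?_, ?_⟩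
        · split_ifs <;> constructor <;> linarith
        · simp only
          split_ifs with h1
          · rw [hS, hc, abs_of_nonneg h1]; ring
          · rw [hS, hc, abs_of_neg (not_le.mp h1)]; ring
      · rintro r ⟨w, hw, rfl⟩
        simp only
        have h1 : -(b * |d.1|) ≤ w * d.1 := by
          have h2 : |w * d.1| ≤ b * |d.1| := by
            rw [abs_mul]
            exact mul_le_mul_of_nonneg_right (abs_le.mpr hw) (abs_nonneg _)
          linarith [neg_abs_le (w * d.1)]
        rw [hS, hc]
        nlinarith
    rw [hinf]
    -- eventually constant
    apply Tendsto.congr' _ tendsto_const_nhds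
    have hδ2 : 0 < x₂ / (|d.2.1| + 1) := by positivity
    have hδc : 0 < |a₂| * x₂ / (|c| + 1) := by positivity
    have hδS : 0 < (|a₂| - b) * x₂ / (|S| + 1) := by
      apply div_pos (by nlinarith) (by positivity)
    set δ : ℝ := min (x₂ / (|d.2.1| + 1)) (min (|a₂| * x₂ / (|c| + 1))
      ((|a₂| - b) * x₂ / (|S| + 1))) with hδ
    have hδpos : 0 < δ := lt_min hδ2 (lt_min hδc hδS)
    filter_upwards [Ioo_mem_nhdsGT_of_mem (Set.left_mem_Ico.mpr hδpos)] with α hα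
    obtain ⟨hα0, hαδ⟩ := hα
    have hb1 : α * |d.2.1| < x₂ := by
      have := lt_of_lt_of_le hαδ (min_le_left _ _)
      rw [lt_div_iff₀ (by positivity)] at this
      nlinarith
    have hb2 : α * |c| < |a₂| * x₂ := by
      have := lt_of_lt_of_le hαδ ((min_le_right _ _).trans (min_le_left _ _))
      rw [lt_div_iff₀ (by positivity)] at this
      nlinarith
    have hb3 : α * |S| < (|a₂| - b) * x₂ := by
      have := lt_of_lt_of_le hαδ ((min_le_right _ _).trans (min_le_right _ _))
      rw [lt_div_iff₀ (by positivity)] at this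
      nlinarith
    -- compute h at the shifted point
    have hpt : (((0 : ℝ), x₂, (0 : ℝ)) + α • d) = (α * d.1, x₂ + α * d.2.1, α * d.2.2) := by
      simp [Prod.ext_iff, smul_eq_mul]
    have hX : α * d.2.2 - a₁ * (α * d.1) - a₂ * (x₂ + α * d.2.1) = α * c - a₂ * x₂ := by
      rw [hc]; ring
    have hXpos : 0 < ψstar * (α * c - a₂ * x₂) := by
      have h1 : -(α * |c|) ≤ ψstar * (α * c) := by
        have := neg_abs_le (ψstar * (α * c))
        rw [abs_mul, habsψ, one_mul, abs_mul, abs_of_pos hα0] at this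
        linarith
      have h2 : ψstar * (α * c - a₂ * x₂) = ψstar * (α * c) + |a₂| * x₂ := by
        rw [mul_sub, show ψstar * (a₂ * x₂) = (ψstar * a₂) * x₂ by ring, hψa]; ring
      rw [h2]; linarith
    have habsX : |α * c - a₂ * x₂| = ψstar * (α * c - a₂ * x₂) := by
      have h1 := abs_of_pos hXpos
      rw [abs_mul, habsψ, one_mul] at h1
      exact h1
    have hx2pos : 0 < x₂ + α * d.2.1 := by
      have : -(α * |d.2.1|) ≤ α * d.2.1 := by
        have := neg_abs_le (α * d.2.1)
        rw [abs_mul, abs_of_pos hα0] at this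
        linarith
      linarith
    have hαS : -(α * |S|) ≤ α * S := by
      have := neg_abs_le (α * S)
      rw [abs_mul, abs_of_pos hα0] at this
      linarith
    have hhval : h ((0, x₂, 0) + α • d) = (|a₂| - b) * x₂ + α * S := by
      rw [hpt, hh]
      simp only
      rw [hX, habsX, abs_of_pos hx2pos, abs_mul, abs_of_pos hα0]
      have hψax : ψstar * (a₂ * x₂) = -(|a₂| * x₂) := by
        rw [show ψstar * (a₂ * x₂) = (ψstar * a₂) * x₂ by ring, hψa]; ring
      have harg : ψstar * (α * c - a₂ * x₂) - b * (α * |d.1|) - b * (x₂ + α * d.2.1)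
          = (|a₂| - b) * x₂ + α * S := by
        rw [hS]
        linear_combination -hψax
      rw [harg]
      apply max_eq_right
      linarith
    rw [hhval, hval]
    rw [show (|a₂| - b) * x₂ + α * S - (|a₂| - b) * x₂ = α * S by ring]
    exact (mul_div_cancel_left₀ S (ne_of_gt hα0)).symm
end

section
/- Let T > 0, let s : ℝⁿ × ℝˡ → ℝᵐ be continuously differentiable, let x₀ ∈ ℝⁿ, and let z, g : [0, T] → ℝⁿ be continuous. Define x(t) = x₀ + ∫₀ᵗ z(τ) dτ and ω(z, c) = (1/2) ∫₀ᵀ ‖s(x(t), c)‖² dt. Then for every c ∈ ℝˡ and every direction (g, γ) with γ ∈ ℝˡ, lim_{α → 0⁺} ( ω(z + α g, c + α γ) − ω(z, c) ) / α = ∫₀ᵀ ⟨ Σ_{i=1}^{m} ∫_t^T s_i(x(τ), c) ∇ₓ s_i(x(τ), c) dτ , g(t) ⟩ dt + ⟨ Σ_{i=1}^{m} ∫₀ᵀ s_i(x(t), c) ∇_c s_i(x(t), c) dt , γ ⟩. -/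
/-! Along the ray `(z + α g, c + α γ)` the trajectory is `x + α G` with `G t = ∫₀ᵗ g`, so `ω`
becomes `∫₀ᵀ f ((x t, c) + α (G t, γ)) dt` with `f = ½ ‖s‖²`. The `α`-derivative of the integrand is
continuous on the compact set `[0, T] × [-1, 1]`, hence bounded, so we may differentiate under the
integral sign and get `∫₀ᵀ Df (x t, c) (G t, γ) dt`. Splitting `Df` into its `x`- and `c`-partials
and integrating by parts, `∫₀ᵀ h(t) ∫₀ᵗ g = ∫₀ᵀ (∫ₜᵀ h) g(t)`, moves the primitive of `g` onto the
sensitivities `sᵢ ∇ₓ sᵢ`. -/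

open MeasureTheory Filter intervalIntegral

open Set
open scoped Interval

theorem ContinuousLinearMap.apply_eq_sum_smul_single {ι F : Type*} [Fintype ι] [DecidableEq ι]
    [NormedAddCommGroup F] [NormedSpace ℝ F] (L : (ι → ℝ) →L[ℝ] F) (u : ι → ℝ) :
    L u = ∑ j, u j • L (Pi.single j 1) := by
  conv_lhs => rw [pi_eq_sum_univ' u]
  simp only [map_sum, map_smul]

section PartialDerivatives

variable {E₁ E₂ F : Type*} [NormedAddCommGroup E₁] [NormedSpace ℝ E₁]
  [NormedAddCommGroup E₂] [NormedSpace ℝ E₂] [NormedAddCommGroup F] [NormedSpace ℝ F]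
  {f : E₁ × E₂ → F} {y : E₁} {c : E₂}

theorem fderiv_comp_prodMk_left (hf : DifferentiableAt ℝ f (y, c)) :
    fderiv ℝ (fun y' => f (y', c)) y = (fderiv ℝ f (y, c)).comp (.inl ℝ E₁ E₂) :=
  (hf.hasFDerivAt.comp y (hasFDerivAt_prodMk_left y c)).fderiv

theorem fderiv_comp_prodMk_right (hf : DifferentiableAt ℝ f (y, c)) :
    fderiv ℝ (fun c' => f (y, c')) c = (fderiv ℝ f (y, c)).comp (.inr ℝ E₁ E₂) :=
  (hf.hasFDerivAt.comp c (hasFDerivAt_prodMk_right y c)).fderiv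

end PartialDerivatives

theorem fderiv_apply_prod_eq_sum {ι κ F : Type*} [Fintype ι] [Fintype κ] [DecidableEq ι]
    [DecidableEq κ] [NormedAddCommGroup F] [NormedSpace ℝ F]
    {f : (ι → ℝ) × (κ → ℝ) → F} {y : ι → ℝ} {c : κ → ℝ} (hf : DifferentiableAt ℝ f (y, c))
    (u : ι → ℝ) (v : κ → ℝ) :
    fderiv ℝ f (y, c) (u, v) = ∑ j, u j • fderiv ℝ (fun y' => f (y', c)) y (Pi.single j 1)
      + ∑ k, v k • fderiv ℝ (fun c' => f (y, c')) c (Pi.single k 1) := by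
  rw [← ContinuousLinearMap.comp_inl_add_comp_inr, fderiv_comp_prodMk_left hf,
    fderiv_comp_prodMk_right hf, ContinuousLinearMap.apply_eq_sum_smul_single _ u,
    ContinuousLinearMap.apply_eq_sum_smul_single _ v]

theorem fderiv_half_sum_sq_apply {E ι : Type*} [NormedAddCommGroup E] [NormedSpace ℝ E]
    [Fintype ι] {φ : E → ι → ℝ} {p : E} (hφ : DifferentiableAt ℝ φ p) (v : E) :
    fderiv ℝ (fun q => (1 / 2 : ℝ) * ∑ i, φ q i ^ 2) p v
      = ∑ i, φ p i * fderiv ℝ (fun q => φ q i) p v := by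
  have hφi : ∀ i, HasFDerivAt (fun q => φ q i ^ 2)
      ((2 * φ p i) • fderiv ℝ (fun q => φ q i) p) p := fun i => by
    simpa using (differentiableAt_pi.mp hφ i).hasFDerivAt.pow 2
  rw [((HasFDerivAt.fun_sum fun i _ => hφi i).const_mul (1 / 2 : ℝ)).fderiv]
  simp only [one_div, _root_.smul_apply, _root_.sum_apply, smul_eq_mul, Finset.mul_sum]
  exact Finset.sum_congr rfl fun i _ => by ring

theorem fderiv_half_sum_sq_prod_apply {ι κ σ : Type*} [Fintype ι] [Fintype κ] [Fintype σ]
    [DecidableEq ι] [DecidableEq κ] {s : (ι → ℝ) → (κ → ℝ) → σ → ℝ} {y : ι → ℝ} {c : κ → ℝ}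
    (hs : DifferentiableAt ℝ (fun p : (ι → ℝ) × (κ → ℝ) => s p.1 p.2) (y, c))
    (u : ι → ℝ) (v : κ → ℝ) :
    fderiv ℝ (fun p : (ι → ℝ) × (κ → ℝ) => (1 / 2 : ℝ) * ∑ i, s p.1 p.2 i ^ 2) (y, c) (u, v)
      = ∑ i, ∑ j, s y c i * fderiv ℝ (fun y' => s y' c i) y (Pi.single j 1) * u j
        + ∑ i, ∑ k, s y c i * fderiv ℝ (fun c' => s y c' i) c (Pi.single k 1) * v k := by
  rw [fderiv_half_sum_sq_apply hs, ← Finset.sum_add_distrib]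
  refine Finset.sum_congr rfl fun i _ => ?_
  simp only [fderiv_apply_prod_eq_sum (differentiableAt_pi.mp hs i), smul_eq_mul, mul_add,
    Finset.mul_sum]
  congr 1 <;> exact Finset.sum_congr rfl fun _ _ => by ring

theorem hasDerivAt_intervalIntegral_comp_add_smul {E F : Type*}
    [NormedAddCommGroup E] [NormedSpace ℝ E] [NormedAddCommGroup F] [NormedSpace ℝ F]
    {f : E → F} (hf : ContDiff ℝ 1 f) {P V : ℝ → E} {a b : ℝ}
    (hP : ContinuousOn P [[a, b]]) (hV : ContinuousOn V [[a, b]]) :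
    HasDerivAt (fun α : ℝ => ∫ t in a..b, f (P t + α • V t))
      (∫ t in a..b, fderiv ℝ f (P t) (V t)) 0 := by
  set F' : ℝ → ℝ → F := fun α t => fderiv ℝ f (P t + α • V t) (V t)
  have hray : ∀ α : ℝ, ContinuousOn (fun t => P t + α • V t) [[a, b]] :=
    fun α => hP.add (hV.const_smul α)
  have hF'c : ContinuousOn (fun q : ℝ × ℝ => F' q.2 q.1) ([[a, b]] ×ˢ Icc (-1) 1) := by
    have hfst : MapsTo Prod.fst ([[a, b]] ×ˢ Icc (-1 : ℝ) 1) [[a, b]] := fun q hq => hq.1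
    have hP' := hP.comp continuous_fst.continuousOn hfst
    have hV' := hV.comp continuous_fst.continuousOn hfst
    exact ((hf.continuous_fderiv one_ne_zero).comp_continuousOn
      (hP'.add (continuous_snd.continuousOn.smul hV'))).clm_apply hV'
  obtain ⟨C, hC⟩ := (isCompact_uIcc.prod isCompact_Icc).exists_bound_of_continuousOn hF'c
  have hmeas : ∀ {φ : ℝ → F}, ContinuousOn φ [[a, b]] →
      AEStronglyMeasurable φ (volume.restrict (Ι a b)) :=
    fun hφ => (hφ.mono uIoc_subset_uIcc).aestronglyMeasurable measurableSet_uIoc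
  have hderiv : ∀ t α, HasDerivAt (fun β : ℝ => f (P t + β • V t)) (F' α t) α := by
    intro t α
    have hlin : HasDerivAt (fun β : ℝ => P t + β • V t) (V t) α := by
      simpa using ((hasDerivAt_id α).smul_const (V t)).const_add (P t)
    exact ((hf.differentiable one_ne_zero _).hasFDerivAt).comp_hasDerivAt α hlin
  have hbound : ∀ t ∈ Ι a b, ∀ α ∈ Metric.ball (0 : ℝ) 1, ‖F' α t‖ ≤ C := fun t ht α hα =>
    hC (t, α) ⟨uIoc_subset_uIcc ht, abs_le.mp (mem_ball_zero_iff.mp hα).le⟩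
  have := intervalIntegral.hasDerivAt_integral_of_dominated_loc_of_deriv_le
    (μ := volume) (F' := F') (bound := fun _ => C) (Metric.ball_mem_nhds (0:ℝ) one_pos)
    (Eventually.of_forall fun α => hmeas (hf.continuous.comp_continuousOn (hray α)))
    (hf.continuous.comp_continuousOn (hray 0)).intervalIntegrable
    (hmeas ((hF'c.comp (continuous_id.prodMk continuous_const).continuousOn
      fun t ht => ⟨ht, by simp⟩)))
    (Eventually.of_forall hbound) intervalIntegrable_const
    (Eventually.of_forall fun t _ α _ => hderiv t α)
  simpa [F'] using this.2

theorem intervalIntegral.integral_sum_sum {ι κ E : Type*} [Fintype ι] [Fintype κ]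
    [NormedAddCommGroup E] [NormedSpace ℝ E] {μ : Measure ℝ} {a b : ℝ} {φ : ι → κ → ℝ → E}
    (hφ : ∀ i j, IntervalIntegrable (φ i j) μ a b) :
    ∫ t in a..b, ∑ i, ∑ j, φ i j t ∂μ = ∑ i, ∑ j, ∫ t in a..b, φ i j t ∂μ := by
  rw [integral_finsetSum (f := fun i t => ∑ j, φ i j t) fun i _ => by
    simpa only [← Finset.sum_apply] using IntervalIntegrable.sum _ fun j _ => hφ i j]
  exact Finset.sum_congr rfl fun i _ => integral_finsetSum fun j _ => hφ i j

theorem intervalIntegral.integral_mul_primitive_eq_integral_tail_mul {a b : ℝ} {h g : ℝ → ℝ}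
    (hh : ContinuousOn h [[a, b]]) (hg : ContinuousOn g [[a, b]]) :
    ∫ t in a..b, h t * ∫ τ in a..t, g τ = ∫ t in a..b, (∫ τ in t..b, h τ) * g t := by
  have hopen : IsOpen (Ioo (min a b) (max a b)) := isOpen_Ioo
  have hsub : Ioo (min a b) (max a b) ⊆ [[a, b]] := Ioo_subset_Icc_self
  have htail : ∀ t ∈ Ioo (min a b) (max a b),
      HasDerivAt (fun t => ∫ τ in t..b, h τ) (-h t) t := fun t ht =>
    integral_hasDerivAt_left (hh.mono (uIcc_subset_uIcc_right (hsub ht))).intervalIntegrable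
      ((hh.mono hsub).stronglyMeasurableAtFilter hopen t ht)
      ((hh.mono hsub).continuousAt (hopen.mem_nhds ht))
  have hprim : ∀ t ∈ Ioo (min a b) (max a b),
      HasDerivAt (fun t => ∫ τ in a..t, g τ) (g t) t := fun t ht =>
    integral_hasDerivAt_right (hg.mono (uIcc_subset_uIcc_left (hsub ht))).intervalIntegrable
      ((hg.mono hsub).stronglyMeasurableAtFilter hopen t ht)
      ((hg.mono hsub).continuousAt (hopen.mem_nhds ht))
  rw [integral_mul_deriv_eq_deriv_mul_of_hasDerivAt
    (continuousOn_primitive_interval_left hh.integrableOn_uIcc)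
    (continuousOn_primitive_interval hg.integrableOn_uIcc) htail hprim
    hh.neg.intervalIntegrable hg.intervalIntegrable]
  simp [intervalIntegral.integral_neg]

theorem intervalIntegral.integral_sum_mul_primitive_eq {ι κ : Type*} [Fintype ι] [Fintype κ]
    {a b : ℝ} {h : ι → κ → ℝ → ℝ} {g : ℝ → κ → ℝ} (hh : ∀ i j, ContinuousOn (h i j) [[a, b]])
    (hg : ContinuousOn g [[a, b]]) :
    ∫ t in a..b, ∑ i, ∑ j, h i j t * (∫ τ in a..t, g τ) j
      = ∫ t in a..b, ∑ j, (∑ i, ∫ τ in t..b, h i j τ) * g t j := by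
  have hgj : ∀ j, ContinuousOn (fun t => g t j) [[a, b]] :=
    fun j => (continuous_apply j).comp_continuousOn hg
  have hprim : ∀ j, ContinuousOn (fun t => (∫ τ in a..t, g τ) j) [[a, b]] := fun j =>
    (continuous_apply j).comp_continuousOn (continuousOn_primitive_interval hg.integrableOn_uIcc)
  have htail : ∀ i j, ContinuousOn (fun t => ∫ τ in t..b, h i j τ) [[a, b]] :=
    fun i j => continuousOn_primitive_interval_left (hh i j).integrableOn_uIcc
  have hcomp : ∀ t ∈ [[a, b]], ∀ j, (∫ τ in a..t, g τ) j = ∫ τ in a..t, g τ j := fun t ht j =>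
    ((ContinuousLinearMap.proj (R := ℝ) (φ := fun _ : κ => ℝ) j).intervalIntegral_comp_comm
      (hg.mono (uIcc_subset_uIcc_left ht)).intervalIntegrable).symm
  calc ∫ t in a..b, ∑ i, ∑ j, h i j t * (∫ τ in a..t, g τ) j
      = ∑ i, ∑ j, ∫ t in a..b, h i j t * (∫ τ in a..t, g τ) j :=
        integral_sum_sum fun i j => ((hh i j).mul (hprim j)).intervalIntegrable
    _ = ∑ i, ∑ j, ∫ t in a..b, (∫ τ in t..b, h i j τ) * g t j := by
        refine Finset.sum_congr rfl fun i _ => Finset.sum_congr rfl fun j _ => ?_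
        rw [integral_congr fun t ht => (by rw [hcomp t ht j])]
        exact integral_mul_primitive_eq_integral_tail_mul (hh i j) (hgj j)
    _ = ∫ t in a..b, ∑ i, ∑ j, (∫ τ in t..b, h i j τ) * g t j :=
        (integral_sum_sum fun i j => ((htail i j).mul (hgj j)).intervalIntegrable).symm
    _ = ∫ t in a..b, ∑ j, (∑ i, ∫ τ in t..b, h i j τ) * g t j := by
        simp only [Finset.sum_mul]
        exact integral_congr fun t _ => Finset.sum_comm

theorem integral_fderiv_half_sum_sq_primitive {ι κ σ : Type*} [Fintype ι] [Fintype κ]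
    [Fintype σ] [DecidableEq ι] [DecidableEq κ] {s : (ι → ℝ) → (κ → ℝ) → σ → ℝ}
    (hs : ContDiff ℝ 1 (fun p : (ι → ℝ) × (κ → ℝ) => s p.1 p.2)) {a b : ℝ} {x g : ℝ → ι → ℝ}
    (hx : ContinuousOn x [[a, b]]) (hg : ContinuousOn g [[a, b]]) (c γ : κ → ℝ) :
    ∫ t in a..b, fderiv ℝ (fun p : (ι → ℝ) × (κ → ℝ) => (1 / 2 : ℝ) * ∑ i, s p.1 p.2 i ^ 2)
        (x t, c) (∫ τ in a..t, g τ, γ)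
      = (∫ t in a..b, ∑ j, (∑ i, ∫ τ in t..b,
            s (x τ) c i * fderiv ℝ (fun y' => s y' c i) (x τ) (Pi.single j 1)) * g t j)
        + ∑ k, (∑ i, ∫ t in a..b,
            s (x t) c i * fderiv ℝ (fun c' => s (x t) c' i) c (Pi.single k 1)) * γ k := by
  have hsi : ∀ i, ContDiff ℝ 1 fun p : (ι → ℝ) × (κ → ℝ) => s p.1 p.2 i := contDiff_pi.mp hs
  have hxc : ContinuousOn (fun t => (x t, c)) [[a, b]] := hx.prodMk continuousOn_const
  have hD : ∀ i v, ContinuousOn (fun t =>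
      fderiv ℝ (fun p : (ι → ℝ) × (κ → ℝ) => s p.1 p.2 i) (x t, c) v) [[a, b]] := fun i v =>
    (((hsi i).continuous_fderiv one_ne_zero).comp_continuousOn hxc).clm_apply continuousOn_const
  have hS : ∀ i, ContinuousOn (fun t => s (x t) c i) [[a, b]] :=
    fun i => (hsi i).continuous.comp_continuousOn hxc
  have hX : ∀ i j, ContinuousOn (fun t =>
      s (x t) c i * fderiv ℝ (fun y' => s y' c i) (x t) (Pi.single j 1)) [[a, b]] := fun i j =>
    (hS i).mul ((hD i (Pi.single j 1, 0)).congr fun t _ => by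
      rw [fderiv_comp_prodMk_left ((hsi i).differentiable one_ne_zero _)]; rfl)
  have hY : ∀ i k, ContinuousOn (fun t =>
      s (x t) c i * fderiv ℝ (fun c' => s (x t) c' i) c (Pi.single k 1)) [[a, b]] := fun i k =>
    (hS i).mul ((hD i (0, Pi.single k 1)).congr fun t _ => by
      rw [fderiv_comp_prodMk_right ((hsi i).differentiable one_ne_zero _)]; rfl)
  have hGj : ∀ j, ContinuousOn (fun t => (∫ τ in a..t, g τ) j) [[a, b]] := fun j =>
    (continuous_apply j).comp_continuousOn (continuousOn_primitive_interval hg.integrableOn_uIcc)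
  rw [integral_congr fun t _ => fderiv_half_sum_sq_prod_apply (hs.differentiable one_ne_zero _) _ _,
    integral_add (continuousOn_finsetSum _ fun i _ => continuousOn_finsetSum _ fun j _ =>
        (hX i j).fun_mul (hGj j)).intervalIntegrable
      (continuousOn_finsetSum _ fun i _ => continuousOn_finsetSum _ fun k _ =>
        (hY i k).fun_mul continuousOn_const).intervalIntegrable,
    integral_sum_mul_primitive_eq hX hg,
    integral_sum_sum fun i k => ((hY i k).fun_mul continuousOn_const).intervalIntegrable]
  simp only [intervalIntegral.integral_mul_const, Finset.sum_mul]
  rw [Finset.sum_comm]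

/-- Gâteaux derivative of the surface-penalty functional
`ω(z, c) = (1/2)∫₀ᵀ ‖s(x(t), c)‖² dt`, where `x(t) = x₀ + ∫₀ᵗ z`, at `(z, c)` in the
direction `(g, γ)`:
`∫₀ᵀ ⟨Σᵢ ∫ₜᵀ sᵢ(x(τ),c) ∇ₓsᵢ(x(τ),c) dτ, g(t)⟩ dt + ⟨Σᵢ ∫₀ᵀ sᵢ(x(t),c) ∇_c sᵢ(x(t),c) dt, γ⟩`. -/
theorem gateaux_derivative_of_omega (n l m : ℕ) (T : ℝ) (hT : 0 < T)
    (s : (Fin n → ℝ) → (Fin l → ℝ) → Fin m → ℝ)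
    (hs : ContDiff ℝ 1 (fun p : (Fin n → ℝ) × (Fin l → ℝ) => s p.1 p.2))
    (x₀ : Fin n → ℝ) (z g : ℝ → Fin n → ℝ)
    (hz : ContinuousOn z (Set.Icc 0 T)) (hg : ContinuousOn g (Set.Icc 0 T))
    (x : ℝ → Fin n → ℝ) (hx : ∀ t, x t = x₀ + ∫ τ in (0:ℝ)..t, z τ)
    (gradx : (Fin n → ℝ) → (Fin l → ℝ) → Fin m → Fin n → ℝ)
    (hgradx : ∀ y c i j, gradx y c i j = fderiv ℝ (fun y' => s y' c i) y (Pi.single j 1))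
    (gradc : (Fin n → ℝ) → (Fin l → ℝ) → Fin m → Fin l → ℝ)
    (hgradc : ∀ y c i k, gradc y c i k = fderiv ℝ (fun c' => s y c' i) c (Pi.single k 1))
    (ω : (ℝ → Fin n → ℝ) → (Fin l → ℝ) → ℝ)
    (hω : ∀ w c, ω w c =
      (1 / 2) * ∫ t in (0:ℝ)..T, ∑ i, (s (x₀ + ∫ τ in (0:ℝ)..t, w τ) c i) ^ 2)
    (c γ : Fin l → ℝ) :
    Tendsto (fun α => (ω (fun t => z t + α • g t) (c + α • γ) - ω z c) / α)
      (nhdsWithin 0 (Set.Ioi 0))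
      (nhds ((∫ t in (0:ℝ)..T,
          ∑ j, (∑ i, ∫ τ in t..T, s (x τ) c i * gradx (x τ) c i j) * g t j)
        + ∑ k, (∑ i, ∫ t in (0:ℝ)..T, s (x t) c i * gradc (x t) c i k) * γ k)) := by
  simp only [hgradx, hgradc]
  rw [← uIcc_of_le hT.le] at hz hg
  set f : (Fin n → ℝ) × (Fin l → ℝ) → ℝ := fun p => (1 / 2) * ∑ i, s p.1 p.2 i ^ 2
  have hf : ContDiff ℝ 1 f := by
    have := contDiff_pi.mp hs
    fun_prop
  have hxc : ContinuousOn x [[0, T]] :=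
    (continuousOn_const.add (continuousOn_primitive_interval hz.integrableOn_uIcc)).congr
      fun t _ => hx t
  have hline : ∀ α : ℝ, ω (fun t => z t + α • g t) (c + α • γ)
      = ∫ t in (0:ℝ)..T, f ((x t, c) + α • (∫ τ in (0:ℝ)..t, g τ, γ)) := by
    intro α
    rw [hω, ← intervalIntegral.integral_const_mul]
    refine integral_congr fun t ht => ?_
    have hsub := uIcc_subset_uIcc_left ht
    rw [integral_add (g := fun τ => α • g τ) (hz.mono hsub).intervalIntegrable
      ((hg.mono hsub).const_smul α).intervalIntegrable, intervalIntegral.integral_smul, hx t]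
    simp only [f, Prod.smul_mk, Prod.mk_add_mk, add_assoc]
  have hω₀ : ω z c = ∫ t in (0:ℝ)..T, f (x t, c) := by simpa using hline 0
  have hderiv := hasDerivAt_intervalIntegral_comp_add_smul hf
    (hxc.prodMk (continuousOn_const (c := c)))
    ((continuousOn_primitive_interval (μ := volume) hg.integrableOn_uIcc).prodMk
      (continuousOn_const (c := γ)))
  rw [integral_fderiv_half_sum_sq_primitive hs hxc hg] at hderiv
  refine hderiv.tendsto_slope_zero_right.congr fun α => ?_
  simp only [zero_add, Prod.smul_mk, Prod.mk_add_mk, zero_smul, add_zero, smul_eq_mul, hline, hω₀,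
    div_eq_inv_mul]
end

section
/- Let T > 0, let u : ℝⁿ × ℝᵖ → ℝ be continuously differentiable, let a, x₀ ∈ ℝⁿ, and let z, g : [0, T] → ℝⁿ be continuous. Define x(t) = x₀ + ∫₀ᵗ z(τ) dτ, h(t) = z₁(t) − ⟨a, x(t)⟩ − u(x(t), p), and Φ(z, p) = (1/2) ∫₀ᵀ h(t)² dt. Then for every p ∈ ℝᵖ and every direction (g, q) with q ∈ ℝᵖ, lim_{α → 0⁺} ( Φ(z + α g, p + α q) − Φ(z, p) ) / α = ∫₀ᵀ ⟨ h(t) e₁ − ∫_t^T h(τ) ( a + ∇ₓ u(x(τ), p) ) dτ , g(t) ⟩ dt − ⟨ ∫₀ᵀ h(t) ∇ₚ u(x(t), p) dt , q ⟩, where e₁ is the first standard basis vector of ℝⁿ. -/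
/-!
Along the ray `(z + α g, P + α q)` the trajectory moves by `α G` with `G(t) = ∫₀ᵗ g`, so the
residual is `C¹` in `α` with derivative `g₁ - ⟨a, G⟩ - Du(x + α G, P + α q)(G, q)`, jointly
continuous in `(α, t)`. Differentiating `½ ∫₀ᵀ h²` under the integral sign at `α = 0` gives
`∫₀ᵀ h (g₁ - ⟨a + ∇ₓu, G⟩ - ⟨∇ₚu, q⟩)`, and integration by parts,
`∫₀ᵀ φ(t) ∫₀ᵗ g = ∫₀ᵀ (∫ₜᵀ φ) g(t)`, moves the time integral from `g` onto `h (a + ∇ₓu)`.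
Data that are only continuous on `[0, T]` are first extended continuously to `ℝ`; neither side
of the formula sees the extension.
-/

open MeasureTheory Filter intervalIntegral

namespace intervalIntegral

theorem integral_mul_primitive_eq_integral_tail_mul_s13 {φ ψ : ℝ → ℝ} (hφ : Continuous φ)
    (hψ : Continuous ψ) (a b : ℝ) :
    ∫ t in a..b, φ t * ∫ τ in a..t, ψ τ = ∫ t in a..b, (∫ τ in t..b, φ τ) * ψ t := by
  have htail : ∀ t, HasDerivAt (fun s => ∫ τ in s..b, φ τ) (-φ t) t := fun t =>
    integral_hasDerivAt_left (hφ.intervalIntegrable _ _) (hφ.stronglyMeasurableAtFilter _ _)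
      hφ.continuousAt
  have hprim : ∀ t, HasDerivAt (fun s => ∫ τ in a..s, ψ τ) (ψ t) t := fun t =>
    (hψ.integral_hasStrictDerivAt a t).hasDerivAt
  have hparts := integral_mul_deriv_eq_deriv_mul (fun t _ => htail t) (fun t _ => hprim t)
    (hφ.neg.intervalIntegrable a b) (hψ.intervalIntegrable a b)
  simp only [integral_same, zero_mul, mul_zero, sub_zero, neg_mul, integral_neg, zero_sub,
    neg_neg] at hparts
  exact hparts.symm

theorem hasDerivAt_integral_of_continuous {E : Type*} [NormedAddCommGroup E] [NormedSpace ℝ E]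
    {F F' : ℝ → ℝ → E} {a b α₀ : ℝ} (hF : ∀ α, Continuous (F α))
    (hF' : Continuous (Function.uncurry F'))
    (hderiv : ∀ α t, HasDerivAt (F · t) (F' α t) α) :
    HasDerivAt (fun α => ∫ t in a..b, F α t) (∫ t in a..b, F' α₀ t) α₀ := by
  obtain ⟨C, hC⟩ := ((isCompact_closedBall α₀ 1).prod isCompact_uIcc).exists_bound_of_continuousOn
    hF'.continuousOn
  refine (hasDerivAt_integral_of_dominated_loc_of_deriv_le (bound := fun _ => C)
    (Metric.ball_mem_nhds α₀ one_pos) (.of_forall fun α => (hF α).aestronglyMeasurable)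
    ((hF α₀).intervalIntegrable a b) (hF'.comp (.prodMk_right α₀)).aestronglyMeasurable
    (.of_forall fun t ht α hα =>
      hC (α, t) ⟨Metric.ball_subset_closedBall hα, Set.uIoc_subset_uIcc ht⟩)
    intervalIntegrable_const (.of_forall fun t _ α _ => hderiv α t)).2

theorem continuous_primitive_left {E : Type*} [NormedAddCommGroup E] [NormedSpace ℝ E]
    {f : ℝ → E} {μ : Measure ℝ} [NullSingletonClass μ]
    (h_int : ∀ a b, IntervalIntegrable f μ a b) (b : ℝ) :
    Continuous fun a => ∫ x in a..b, f x ∂μ := by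
  simp only [integral_symm b]
  exact (continuous_primitive h_int b).neg

theorem eval_integral {ι : Type*} [Fintype ι] {E : ι → Type*} [∀ i, NormedAddCommGroup (E i)]
    [∀ i, NormedSpace ℝ (E i)] [∀ i, CompleteSpace (E i)] {f : ℝ → ∀ i, E i} {μ : Measure ℝ}
    {a b : ℝ} (hf : IntervalIntegrable f μ a b) (i : ι) :
    (∫ x in a..b, f x ∂μ) i = ∫ x in a..b, f x i ∂μ :=
  ((ContinuousLinearMap.proj (R := ℝ) (φ := E) i).intervalIntegral_comp_comm hf).symm

end intervalIntegral

theorem ContinuousLinearMap.apply_eq_sum_apply_single_mul {R ι : Type*} [CommSemiring R]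
    [TopologicalSpace R] [Fintype ι] [DecidableEq ι] (L : (ι → R) →L[R] R) (v : ι → R) :
    L v = ∑ j, L (Pi.single j 1) * v j := by
  conv_lhs => rw [← Finset.univ_sum_single v]
  refine (map_sum L _ _).trans (Finset.sum_congr rfl fun j _ => ?_)
  rw [mul_comm, ← smul_eq_mul, ← map_smul, ← Pi.single_smul, smul_eq_mul, mul_one]

theorem ContinuousOn.exists_continuous_eqOn_Icc {α β : Type*} [LinearOrder α]
    [TopologicalSpace α] [OrderTopology α] [TopologicalSpace β] {f : α → β} {a b : α}
    (hf : ContinuousOn f (Set.Icc a b)) (hab : a ≤ b) :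
    ∃ F : α → β, Continuous F ∧ Set.EqOn F f (Set.Icc a b) :=
  ⟨_, hf.domRestrict.Icc_extend', fun _ ht => Set.IccExtend_of_mem hab _ ht⟩

section PartialDerivatives

variable {E F G : Type*} [NormedAddCommGroup E] [NormedSpace ℝ E] [NormedAddCommGroup F]
  [NormedSpace ℝ F] [NormedAddCommGroup G] [NormedSpace ℝ G] {f : E → F → G} {y : E} {p : F}

theorem fderiv_apply_left_eq_comp_inl (hf : DifferentiableAt ℝ (Function.uncurry f) (y, p)) :
    fderiv ℝ (fun y' => f y' p) y = (fderiv ℝ (Function.uncurry f) (y, p)).comp (.inl ℝ E F) :=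
  (HasFDerivAt.comp (f := (·, p)) y hf.hasFDerivAt (hasFDerivAt_prodMk_left y p)).fderiv

theorem fderiv_apply_right_eq_comp_inr (hf : DifferentiableAt ℝ (Function.uncurry f) (y, p)) :
    fderiv ℝ (fun p' => f y p') p = (fderiv ℝ (Function.uncurry f) (y, p)).comp (.inr ℝ E F) :=
  (HasFDerivAt.comp (f := (y, ·)) p hf.hasFDerivAt (hasFDerivAt_prodMk_right y p)).fderiv

theorem fderiv_uncurry_apply_eq_add (hf : DifferentiableAt ℝ (Function.uncurry f) (y, p))
    (v : E) (w : F) :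
    fderiv ℝ (Function.uncurry f) (y, p) (v, w) =
      fderiv ℝ (fun y' => f y' p) y v + fderiv ℝ (fun p' => f y p') p w := by
  rw [fderiv_apply_left_eq_comp_inl hf, fderiv_apply_right_eq_comp_inr hf,
    ContinuousLinearMap.comp_apply, ContinuousLinearMap.comp_apply, ← map_add,
    ContinuousLinearMap.inl_apply, ContinuousLinearMap.inr_apply, Prod.mk_add_mk, add_zero,
    zero_add]

theorem continuous_fderiv_apply_left {X : Type*} [TopologicalSpace X]
    (hf : ContDiff ℝ 1 (Function.uncurry f)) {γ : X → E} (hγ : Continuous γ) (p : F) (v : E) :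
    Continuous fun s => fderiv ℝ (fun y' => f y' p) (γ s) v := by
  have hDf := hf.continuous_fderiv one_ne_zero
  simp only [fderiv_apply_left_eq_comp_inl (hf.differentiable one_ne_zero _)]
  fun_prop

theorem continuous_fderiv_apply_right {X : Type*} [TopologicalSpace X]
    (hf : ContDiff ℝ 1 (Function.uncurry f)) {γ : X → E} (hγ : Continuous γ) (p w : F) :
    Continuous fun s => fderiv ℝ (fun p' => f (γ s) p') p w := by
  have hDf := hf.continuous_fderiv one_ne_zero
  simp only [fderiv_apply_right_eq_comp_inr (hf.differentiable one_ne_zero _)]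
  fun_prop

end PartialDerivatives

theorem fderiv_uncurry_apply_eq_sum {ι κ : Type*} [Fintype ι] [DecidableEq ι] [Fintype κ]
    [DecidableEq κ] {f : (ι → ℝ) → (κ → ℝ) → ℝ} {y : ι → ℝ} {p : κ → ℝ}
    (hf : DifferentiableAt ℝ (Function.uncurry f) (y, p)) (v : ι → ℝ) (w : κ → ℝ) :
    fderiv ℝ (Function.uncurry f) (y, p) (v, w) =
      ∑ j, fderiv ℝ (fun y' => f y' p) y (Pi.single j 1) * v j +
        ∑ i, fderiv ℝ (fun p' => f y p') p (Pi.single i 1) * w i := by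
  rw [fderiv_uncurry_apply_eq_add hf, ContinuousLinearMap.apply_eq_sum_apply_single_mul,
    ContinuousLinearMap.apply_eq_sum_apply_single_mul]

noncomputable section Trajectory

variable {E : Type*} [NormedAddCommGroup E] [NormedSpace ℝ E]

def trajectory (x₀ : E) (w : ℝ → E) (t : ℝ) : E := x₀ + ∫ τ in (0:ℝ)..t, w τ

theorem trajectory_congr {T : ℝ} {w w' : ℝ → E} (x₀ : E) (h : Set.EqOn w w' (Set.Icc 0 T)) :
    Set.EqOn (trajectory x₀ w) (trajectory x₀ w') (Set.Icc 0 T) := fun t ht => by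
  refine congrArg (x₀ + ·) (integral_congr fun τ hτ => h ?_)
  rw [Set.uIcc_of_le ht.1] at hτ
  exact ⟨hτ.1, hτ.2.trans ht.2⟩

theorem continuous_trajectory {w : ℝ → E} (hw : Continuous w) (x₀ : E) :
    Continuous (trajectory x₀ w) :=
  continuous_const.add (continuous_primitive (fun _ _ => hw.intervalIntegrable _ _) 0)

theorem trajectory_add_smul {w g : ℝ → E} (hw : Continuous w) (hg : Continuous g) (x₀ : E)
    (α t : ℝ) :
    trajectory x₀ (fun τ => w τ + α • g τ) t =
      trajectory x₀ w t + α • ∫ τ in (0:ℝ)..t, g τ := by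
  rw [trajectory, trajectory, integral_add (f := w) (g := fun τ => α • g τ)
    (hw.intervalIntegrable _ _) ((hg.intervalIntegrable _ _).smul α),
    intervalIntegral.integral_smul, add_assoc]

end Trajectory

noncomputable section Residual

variable {n m : ℕ} (T : ℝ) (a x₀ : Fin (n + 1) → ℝ)
  (u : (Fin (n + 1) → ℝ) → (Fin m → ℝ) → ℝ)

def controlResidual (w : ℝ → Fin (n + 1) → ℝ) (P : Fin m → ℝ) (t : ℝ) : ℝ :=
  w t 0 - ∑ j, a j * trajectory x₀ w t j - u (trajectory x₀ w t) P

def residualFunctional (w : ℝ → Fin (n + 1) → ℝ) (P : Fin m → ℝ) : ℝ :=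
  1 / 2 * ∫ t in (0:ℝ)..T, controlResidual a x₀ u w P t ^ 2

def gateauxFormula (z : ℝ → Fin (n + 1) → ℝ) (P : Fin m → ℝ) (g : ℝ → Fin (n + 1) → ℝ)
    (q : Fin m → ℝ) : ℝ :=
  (∫ t in (0:ℝ)..T, controlResidual a x₀ u z P t * g t 0 -
      ∑ j, (∫ τ in t..T, controlResidual a x₀ u z P τ *
        (a j + fderiv ℝ (fun y => u y P) (trajectory x₀ z τ) (Pi.single j 1))) * g t j) -
    ∑ i, (∫ t in (0:ℝ)..T, controlResidual a x₀ u z P t *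
      fderiv ℝ (fun P' => u (trajectory x₀ z t) P') P (Pi.single i 1)) * q i

variable {T a x₀ u}

theorem controlResidual_congr {w w' : ℝ → Fin (n + 1) → ℝ} (h : Set.EqOn w w' (Set.Icc 0 T))
    (P : Fin m → ℝ) :
    Set.EqOn (controlResidual a x₀ u w P) (controlResidual a x₀ u w' P) (Set.Icc 0 T) :=
  fun t ht => by simp only [controlResidual, h ht, trajectory_congr x₀ h ht]

theorem residualFunctional_congr (hT : 0 ≤ T) {w w' : ℝ → Fin (n + 1) → ℝ}
    (h : Set.EqOn w w' (Set.Icc 0 T)) (P : Fin m → ℝ) :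
    residualFunctional T a x₀ u w P = residualFunctional T a x₀ u w' P := by
  refine congrArg _ (integral_congr fun t ht => ?_)
  rw [Set.uIcc_of_le hT] at ht
  simp only [controlResidual_congr h P ht]

theorem gateauxFormula_congr (hT : 0 ≤ T) {z z' g g' : ℝ → Fin (n + 1) → ℝ}
    (hz : Set.EqOn z z' (Set.Icc 0 T)) (hg : Set.EqOn g g' (Set.Icc 0 T)) (P q : Fin m → ℝ) :
    gateauxFormula T a x₀ u z P g q = gateauxFormula T a x₀ u z' P g' q := by
  have hres := controlResidual_congr (a := a) (x₀ := x₀) (u := u) hz P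
  have htraj := trajectory_congr x₀ hz
  unfold gateauxFormula
  congr 1
  · refine integral_congr fun t ht => ?_
    rw [Set.uIcc_of_le hT] at ht
    have hsub : Set.uIcc t T ⊆ Set.Icc 0 T := by
      rw [Set.uIcc_of_le ht.2]
      exact Set.Icc_subset_Icc_left ht.1
    simp only [hres ht, hg ht]
    refine congrArg _ (Finset.sum_congr rfl fun j _ => congrArg (· * g' t j) ?_)
    exact integral_congr fun τ hτ => by simp only [hres (hsub hτ), htraj (hsub hτ)]
  · refine Finset.sum_congr rfl fun i _ => congrArg (· * q i) (integral_congr fun t ht => ?_)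
    rw [Set.uIcc_of_le hT] at ht
    simp only [hres ht, htraj ht]

theorem continuous_controlResidual (hu : Continuous (Function.uncurry u))
    {z : ℝ → Fin (n + 1) → ℝ} (hz : Continuous z) (P : Fin m → ℝ) :
    Continuous (controlResidual a x₀ u z P) := by
  have hx := continuous_trajectory hz x₀
  exact (by fun_prop : Continuous fun t => z t 0 - ∑ j, a j * trajectory x₀ z t j).sub
    (hu.comp (hx.prodMk continuous_const))

section Perturbation

variable {z g : ℝ → Fin (n + 1) → ℝ} (hz : Continuous z) (hg : Continuous g) (P q : Fin m → ℝ)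
include hz hg

theorem controlResidual_add_smul (α t : ℝ) :
    controlResidual a x₀ u (fun τ => z τ + α • g τ) (P + α • q) t =
      z t 0 + α * g t 0 - ∑ j, a j * (trajectory x₀ z t j + α * (∫ τ in (0:ℝ)..t, g τ) j) -
        u (trajectory x₀ z t + α • ∫ τ in (0:ℝ)..t, g τ) (P + α • q) := by
  simp only [controlResidual, trajectory_add_smul hz hg, Pi.add_apply, Pi.smul_apply,
    smul_eq_mul]

theorem continuous_controlResidual_add_smul (hu : Continuous (Function.uncurry u)) :
    Continuous fun p : ℝ × ℝ =>
      controlResidual a x₀ u (fun τ => z τ + p.1 • g τ) (P + p.1 • q) p.2 := by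
  have hx := continuous_trajectory hz x₀
  have hG := continuous_primitive (μ := volume) (fun _ _ => hg.intervalIntegrable _ _) 0
  simp only [controlResidual_add_smul hz hg]
  have hcurve : Continuous fun p : ℝ × ℝ =>
      (trajectory x₀ z p.2 + p.1 • ∫ τ in (0:ℝ)..p.2, g τ, P + p.1 • q) := by
    fun_prop
  exact (by fun_prop : Continuous fun p : ℝ × ℝ => z p.2 0 + p.1 * g p.2 0 -
    ∑ j, a j * (trajectory x₀ z p.2 j + p.1 * (∫ τ in (0:ℝ)..p.2, g τ) j)).sub (hu.comp hcurve)

theorem hasDerivAt_controlResidual_add_smul (hu : Differentiable ℝ (Function.uncurry u))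
    (α t : ℝ) :
    HasDerivAt (fun β => controlResidual a x₀ u (fun τ => z τ + β • g τ) (P + β • q) t)
      (g t 0 - ∑ j, a j * (∫ τ in (0:ℝ)..t, g τ) j -
        fderiv ℝ (Function.uncurry u) (trajectory x₀ z t + α • ∫ τ in (0:ℝ)..t, g τ, P + α • q)
          (∫ τ in (0:ℝ)..t, g τ, q)) α := by
  set G := ∫ τ in (0:ℝ)..t, g τ
  have hcurve : HasDerivAt (fun β : ℝ => (trajectory x₀ z t + β • G, P + β • q)) (G, q) α := by
    simpa using (((hasDerivAt_id α).smul_const G).const_add (trajectory x₀ z t)).prodMk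
      (((hasDerivAt_id α).smul_const q).const_add P)
  have hnonlin := (hu _).hasFDerivAt.comp_hasDerivAt α hcurve
  have hlin : HasDerivAt (fun β : ℝ => ∑ j, a j * (trajectory x₀ z t j + β * G j))
      (∑ j, a j * G j) α :=
    .fun_sum fun j _ => by
      simpa using
        (((hasDerivAt_id α).mul_const (G j)).const_add (trajectory x₀ z t j)).const_mul (a j)
  have hfirst : HasDerivAt (fun β : ℝ => z t 0 + β * g t 0) (g t 0) α := by
    simpa using ((hasDerivAt_id α).mul_const (g t 0)).const_add (z t 0)
  simp only [controlResidual_add_smul hz hg]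
  exact (hfirst.sub hlin).sub hnonlin

theorem hasDerivAt_residualFunctional_add_smul (hu : ContDiff ℝ 1 (Function.uncurry u)) :
    HasDerivAt (fun α : ℝ => residualFunctional T a x₀ u (fun t => z t + α • g t) (P + α • q))
      (∫ t in (0:ℝ)..T, controlResidual a x₀ u z P t *
        (g t 0 - ∑ j, a j * (∫ τ in (0:ℝ)..t, g τ) j -
          fderiv ℝ (Function.uncurry u) (trajectory x₀ z t, P) (∫ τ in (0:ℝ)..t, g τ, q))) 0 := by
  have hres := continuous_controlResidual_add_smul (a := a) (x₀ := x₀) hz hg P q hu.continuous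
  have hx := continuous_trajectory hz x₀
  have hG := continuous_primitive (μ := volume) (fun _ _ => hg.intervalIntegrable _ _) 0
  have hDu := hu.continuous_fderiv one_ne_zero
  have hderiv := hasDerivAt_controlResidual_add_smul (a := a) (x₀ := x₀) hz hg P q
    (hu.differentiable one_ne_zero)
  have hres' : Continuous fun p : ℝ × ℝ => g p.2 0 - ∑ j, a j * (∫ τ in (0:ℝ)..p.2, g τ) j -
      fderiv ℝ (Function.uncurry u)
        (trajectory x₀ z p.2 + p.1 • ∫ τ in (0:ℝ)..p.2, g τ, P + p.1 • q)
        (∫ τ in (0:ℝ)..p.2, g τ, q) := by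
    fun_prop
  have hintegral := (hasDerivAt_integral_of_continuous (a := 0) (b := T) (α₀ := 0)
    (F := fun α t => controlResidual a x₀ u (fun τ => z τ + α • g τ) (P + α • q) t ^ 2)
    (F' := fun α t => 2 * (controlResidual a x₀ u (fun τ => z τ + α • g τ) (P + α • q) t *
      (g t 0 - ∑ j, a j * (∫ τ in (0:ℝ)..t, g τ) j - fderiv ℝ (Function.uncurry u)
        (trajectory x₀ z t + α • ∫ τ in (0:ℝ)..t, g τ, P + α • q) (∫ τ in (0:ℝ)..t, g τ, q))))
    (fun α => (hres.comp (.prodMk_right α)).pow 2) ((hres.mul hres').const_mul 2)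
    fun α t => by simpa [mul_assoc] using (hderiv α t).fun_pow 2).const_mul (1 / 2)
  refine hintegral.congr_deriv ?_
  simp only [zero_smul, add_zero, intervalIntegral.integral_const_mul]
  ring

end Perturbation

theorem integral_controlResidual_mul_eq_gateauxFormula (hu : ContDiff ℝ 1 (Function.uncurry u))
    {z g : ℝ → Fin (n + 1) → ℝ} (hz : Continuous z) (hg : Continuous g) (P q : Fin m → ℝ) :
    ∫ t in (0:ℝ)..T, controlResidual a x₀ u z P t *
        (g t 0 - ∑ j, a j * (∫ τ in (0:ℝ)..t, g τ) j -
          fderiv ℝ (Function.uncurry u) (trajectory x₀ z t, P) (∫ τ in (0:ℝ)..t, g τ, q)) =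
      gateauxFormula T a x₀ u z P g q := by
  unfold gateauxFormula
  set h := controlResidual a x₀ u z P
  set x := trajectory x₀ z
  have hx : Continuous x := continuous_trajectory hz x₀
  have hh : Continuous h := continuous_controlResidual hu.continuous hz P
  have hdx := continuous_fderiv_apply_left hu hx P
  have hdp := continuous_fderiv_apply_right hu hx P
  have hpointwise : ∀ t, h t * (g t 0 - ∑ j, a j * (∫ τ in (0:ℝ)..t, g τ) j -
      fderiv ℝ (Function.uncurry u) (x t, P) (∫ τ in (0:ℝ)..t, g τ, q)) =
      h t * g t 0 - ∑ j, h t * (a j + fderiv ℝ (fun y => u y P) (x t) (Pi.single j 1)) *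
        (∫ τ in (0:ℝ)..t, g τ j) -
      ∑ i, h t * fderiv ℝ (fun P' => u (x t) P') P (Pi.single i 1) * q i := fun t => by
    rw [fderiv_uncurry_apply_eq_sum (hu.differentiable one_ne_zero _)]
    simp only [eval_integral (hg.intervalIntegrable 0 t), mul_sub, mul_add, add_mul, Finset.mul_sum, Finset.sum_add_distrib, mul_assoc]
    ring
  have hgj : ∀ j, Continuous fun t => g t j := fun j => (continuous_apply j).comp hg
  have hG : ∀ j, Continuous fun t => ∫ τ in (0:ℝ)..t, g τ j := fun j =>
    continuous_primitive (μ := volume) (fun _ _ => (hgj j).intervalIntegrable _ _) 0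
  have hφ : ∀ j, Continuous fun t =>
      h t * (a j + fderiv ℝ (fun y => u y P) (x t) (Pi.single j 1)) := fun j => by fun_prop
  have htail : ∀ j, Continuous fun t =>
      ∫ τ in t..T, h τ * (a j + fderiv ℝ (fun y => u y P) (x τ) (Pi.single j 1)) := fun j =>
    continuous_primitive_left (μ := volume) (fun _ _ => (hφ j).intervalIntegrable _ _) T
  rw [integral_congr fun t _ => hpointwise t]
  rw [intervalIntegral.integral_sub, intervalIntegral.integral_sub,
    intervalIntegral.integral_finsetSum, intervalIntegral.integral_finsetSum,
    intervalIntegral.integral_sub, intervalIntegral.integral_finsetSum]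
  · congr 1
    · congr 1
      refine Finset.sum_congr rfl fun j _ => ?_
      exact integral_mul_primitive_eq_integral_tail_mul_s13 (hφ j) (hgj j) 0 T
    · exact Finset.sum_congr rfl fun i _ => intervalIntegral.integral_mul_const _ _
  all_goals first
    | exact Continuous.intervalIntegrable (by fun_prop) _ _
    | exact fun _ _ => Continuous.intervalIntegrable (by fun_prop) _ _

theorem hasDerivAt_residualFunctional_add_smul_of_continuousOn (hT : 0 ≤ T)
    (hu : ContDiff ℝ 1 (Function.uncurry u)) {z g : ℝ → Fin (n + 1) → ℝ}
    (hz : ContinuousOn z (Set.Icc 0 T)) (hg : ContinuousOn g (Set.Icc 0 T)) (P q : Fin m → ℝ) :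
    HasDerivAt (fun α : ℝ => residualFunctional T a x₀ u (fun t => z t + α • g t) (P + α • q))
      (gateauxFormula T a x₀ u z P g q) 0 := by
  obtain ⟨zE, hzEc, hzE⟩ := hz.exists_continuous_eqOn_Icc hT
  obtain ⟨gE, hgEc, hgE⟩ := hg.exists_continuous_eqOn_Icc hT
  have hperturb (α : ℝ) :
      Set.EqOn (fun t => zE t + α • gE t) (fun t => z t + α • g t) (Set.Icc 0 T) :=
    fun t ht => by simp only [hzE ht, hgE ht]
  rw [← gateauxFormula_congr hT hzE hgE,
    ← integral_controlResidual_mul_eq_gateauxFormula hu hzEc hgEc]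
  simpa only [residualFunctional_congr hT (hperturb _)] using
    hasDerivAt_residualFunctional_add_smul (T := T) (a := a) (x₀ := x₀) hzEc hgEc P q hu

end Residual

/-- Gâteaux derivative of the one-coordinate residual functional
`Φ(z, p) = (1/2)∫₀ᵀ h(t)² dt`, `h(t) = z₁(t) - ⟨a, x(t)⟩ - u(x(t), p)`,
`x(t) = x₀ + ∫₀ᵗ z`, at `(z, p)` in the direction `(g, q)`:
`∫₀ᵀ ⟨h(t)e₁ - ∫ₜᵀ h(τ)(a + ∇ₓu(x(τ),p)) dτ, g(t)⟩ dt - ⟨∫₀ᵀ h(t) ∇ₚu(x(t),p) dt, q⟩`. -/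
theorem gateaux_derivative_of_Phi (n m : ℕ) (T : ℝ) (hT : 0 < T)
    (u : (Fin (n + 1) → ℝ) → (Fin m → ℝ) → ℝ)
    (hu : ContDiff ℝ 1 (fun q : (Fin (n + 1) → ℝ) × (Fin m → ℝ) => u q.1 q.2))
    (a x₀ : Fin (n + 1) → ℝ) (z g : ℝ → Fin (n + 1) → ℝ)
    (hz : ContinuousOn z (Set.Icc 0 T)) (hg : ContinuousOn g (Set.Icc 0 T))
    (x : ℝ → Fin (n + 1) → ℝ) (hx : ∀ t, x t = x₀ + ∫ τ in (0:ℝ)..t, z τ)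
    (gradx : (Fin (n + 1) → ℝ) → (Fin m → ℝ) → Fin (n + 1) → ℝ)
    (hgradx : ∀ y P j, gradx y P j = fderiv ℝ (fun y' => u y' P) y (Pi.single j 1))
    (gradp : (Fin (n + 1) → ℝ) → (Fin m → ℝ) → Fin m → ℝ)
    (hgradp : ∀ y P i, gradp y P i = fderiv ℝ (fun P' => u y P') P (Pi.single i 1))
    (P q : Fin m → ℝ)
    (h : ℝ → ℝ) (hh : ∀ t, h t = z t 0 - (∑ j, a j * x t j) - u (x t) P)
    (Φ : (ℝ → Fin (n + 1) → ℝ) → (Fin m → ℝ) → ℝ)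
    (hΦ : ∀ w P', Φ w P' = (1 / 2) * ∫ t in (0:ℝ)..T,
      (w t 0 - (∑ j, a j * (x₀ + ∫ τ in (0:ℝ)..t, w τ) j)
        - u (x₀ + ∫ τ in (0:ℝ)..t, w τ) P') ^ 2) :
    Tendsto (fun α => (Φ (fun t => z t + α • g t) (P + α • q) - Φ z P) / α)
      (nhdsWithin 0 (Set.Ioi 0))
      (nhds ((∫ t in (0:ℝ)..T,
          h t * g t 0 - ∑ j, (∫ τ in t..T, h τ * (a j + gradx (x τ) P j)) * g t j)
        - ∑ i, (∫ t in (0:ℝ)..T, h t * gradp (x t) P i) * q i)) := by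
  obtain rfl : gradx = fun y P j => fderiv ℝ (fun y' => u y' P) y (Pi.single j 1) :=
    funext fun y => funext fun P => funext (hgradx y P)
  obtain rfl : gradp = fun y P i => fderiv ℝ (fun P' => u y P') P (Pi.single i 1) :=
    funext fun y => funext fun P => funext (hgradp y P)
  obtain rfl : x = trajectory x₀ z := funext hx
  obtain rfl : h = controlResidual a x₀ u z P := funext hh
  obtain rfl : Φ = residualFunctional T a x₀ u := funext fun w => funext (hΦ w)
  refine (hasDerivAt_residualFunctional_add_smul_of_continuousOn hT.le hu hz hg P q
    ).tendsto_slope_zero_right.congr fun α => ?_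
  simp only [zero_add, zero_smul, add_zero, smul_eq_mul, div_eq_inv_mul]
end
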